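/- arXiv:1410.4741 — 2 statements merged into one kernel-verified Lean document; each statement's English description precedes it below -/
import Mathlib

section
/- Let L and L' be free abelian groups of the same finite rank, A a commutative ring, and φ : L → L' an isogeny (an injective homomorphism with finite cokernel) whose degree deg φ := #(L'/φ(L)) is invertible in A. Then the induced A-algebra homomorphism φ_R : R → R' between the augmentation-ideal-adic completions of A[L] and A[L'] is an isomorphism. -/
set_option maxHeartbeats 1000000
set_option synthInstance.maxHeartbeats 400000

open AddMonoidAlgebra

section generic

variable (A : Type*) [CommRing A] (B : Type*) [CommRing B] [Algebra A B] (J : Ideal B)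

/-- Transition maps of the inverse system `(B/J^k)_k`. -/
noncomputable def idealTrans (k : ℕ) : B ⧸ J ^ (k + 1) →+* B ⧸ J ^ k :=
  Ideal.Quotient.factor (Ideal.pow_le_pow_right (Nat.le_succ k))

/-- The `J`-adic completion `lim_k B/J^k`, realized as a subalgebra of the product
`∏ k, B/J^k` (the compatible families). -/
noncomputable def adicLim : Subalgebra A (∀ k : ℕ, B ⧸ J ^ k) where
  carrier := {f | ∀ k, idealTrans B J k (f (k + 1)) = f k}
  mul_mem' := fun ha hb k => by
    rw [Pi.mul_apply, Pi.mul_apply, map_mul, ha k, hb k]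
  add_mem' := fun ha hb k => by
    rw [Pi.add_apply, Pi.add_apply, map_add, ha k, hb k]
  algebraMap_mem' := fun a k => by
    rw [Pi.algebraMap_apply, Pi.algebraMap_apply,
      IsScalarTower.algebraMap_apply A B (B ⧸ J ^ (k + 1)),
      Ideal.Quotient.algebraMap_eq, idealTrans, Ideal.Quotient.factor_mk,
      IsScalarTower.algebraMap_apply A B (B ⧸ J ^ k), Ideal.Quotient.algebraMap_eq]

/-- The canonical map `B → lim_k B/J^k`. -/
noncomputable def adicLimOf : B →ₐ[A] adicLim A B J :=
  AlgHom.codRestrict (AlgHom.pi (R := A) (A := fun k => B ⧸ J ^ k)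
      (fun k => Ideal.Quotient.mkₐ A (J ^ k)))
    (adicLim A B J) (fun x k => by
      simp only [AlgHom.pi_apply, Ideal.Quotient.mkₐ_eq_mk, idealTrans,
        Ideal.Quotient.factor_mk])

end generic

section grpring

variable (A : Type*) [CommRing A] (L : Type*) [AddCommGroup L]

/-- The augmentation map of the group ring `A[L]`, sending each group element `δ_ℓ` to `1`. -/
noncomputable def aug : AddMonoidAlgebra A L →ₐ[A] A :=
  AddMonoidAlgebra.lift (R := A) (M := L) (A := A) 1

/-- The augmentation ideal `J ⊆ A[L]`. -/
noncomputable def augIdeal : Ideal (AddMonoidAlgebra A L) :=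
  RingHom.ker (aug A L)

/-- `R`, the `J`-adic completion of the group ring `A[L]`. -/
noncomputable abbrev RR := adicLim A (AddMonoidAlgebra A L) (augIdeal A L)

end grpring

/-!
Let `d = deg φ`. Since `d • L' ⊆ φ(L)` and `φ` is injective, there is `ψ : L' → L` with
`ψ ∘ φ = [d]` and `φ ∘ ψ = [d]`, so it suffices that `[d]` induces automorphisms of every
`A[L]/J^k`. There each `δ_a` is unipotent, and since `d` is a unit, a unipotent element has a
unique unipotent `d`-th root (Newton's method); `δ_a ↦ δ_a^{1/d}` is then inverse to `[d]`.
Bijectivity at every level passes to the inverse limit.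
-/
section UnipotentRoots

variable {S : Type*} [CommRing S] {n : ℕ}

open Polynomial in
theorem existsUnique_pow_eq_of_isNilpotent_sub_one (hn : IsUnit (n : S)) {u : S}
    (hu : IsNilpotent (u - 1)) : ∃! r : S, IsNilpotent (r - 1) ∧ r ^ n = u := by
  have key := existsUnique_nilpotent_sub_and_aeval_eq_zero (x := (1 : S)) (P := X ^ n - C u)
    (by rw [map_sub, aeval_X_pow, one_pow, aeval_C, Algebra.algebraMap_self, RingHom.id_apply,
      ← neg_sub]; exact hu.neg)
    (by simpa [derivative_X_pow] using hn)
  refine (existsUnique_congr fun r => ?_).mp key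
  rw [← isNilpotent_neg_iff, neg_sub]
  simp [sub_eq_zero]

theorem sub_one_mem_of_pow_sub_one_mem (hn : IsUnit (n : S)) (I : Ideal S) {r : S}
    (hr : IsNilpotent (r - 1)) (hrn : r ^ n - 1 ∈ I) : r - 1 ∈ I := by
  set q := Ideal.Quotient.mk I
  have hq : IsUnit (n : S ⧸ I) := by simpa using hn.map q
  have : q r = 1 :=
    (existsUnique_pow_eq_of_isNilpotent_sub_one hq (u := 1) (by simp)).unique
      ⟨by simpa using hr.map q,
        by simpa [sub_eq_zero] using Ideal.Quotient.eq_zero_iff_mem.mpr hrn⟩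
      ⟨by simp, one_pow n⟩
  rw [← Ideal.Quotient.eq_zero_iff_mem, map_sub, this, map_one, sub_self]

theorem exists_monoidHom_pow_eq_of_isNilpotent_sub_one {M : Type*} [CommMonoid M]
    (hn : IsUnit (n : S)) (χ : M →* S) (hχ : ∀ m, IsNilpotent (χ m - 1)) :
    ∃ ρ : M →* S, ∀ m, IsNilpotent (ρ m - 1) ∧ ρ m ^ n = χ m := by
  choose ρ hρ using fun m => (existsUnique_pow_eq_of_isNilpotent_sub_one hn (hχ m)).exists
  have root_eq m r (h₁ : IsNilpotent (r - 1)) (h₂ : r ^ n = χ m) : ρ m = r :=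
    (existsUnique_pow_eq_of_isNilpotent_sub_one hn (hχ m)).unique (hρ m) ⟨h₁, h₂⟩
  have unipotent_mul a b : IsNilpotent (ρ a * ρ b - 1) := by
    rw [show ρ a * ρ b - 1 = (ρ a - 1) * ρ b + (ρ b - 1) by ring]
    exact (Commute.all _ _).isNilpotent_add
      ((Commute.all _ _).isNilpotent_mul_right (hρ a).1) (hρ b).1
  refine ⟨⟨⟨ρ, root_eq 1 1 (by simp) (by simp)⟩, fun a b => root_eq _ _ (unipotent_mul a b)
    (by rw [mul_pow, (hρ a).2, (hρ b).2, map_mul])⟩, hρ⟩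

end UnipotentRoots

section AdicLimMap

variable {A : Type*} [CommRing A] {B C : Type*} [CommRing B] [CommRing C] [Algebra A B]
  [Algebra A C] {J : Ideal B} {I : Ideal C}

theorem Ideal.pow_le_comap_pow_of_le_comap {F : B →ₐ[A] C} (hF : J ≤ I.comap F) (k : ℕ) :
    J ^ k ≤ (I ^ k).comap F :=
  (Ideal.pow_right_mono hF k).trans (Ideal.le_comap_pow _ k)

theorem idealTrans_quotientMapₐ (F : B →ₐ[A] C) (hF : J ≤ I.comap F) (k : ℕ)
    (x : B ⧸ J ^ (k + 1)) :
    idealTrans C I k (Ideal.quotientMapₐ _ F (Ideal.pow_le_comap_pow_of_le_comap hF (k + 1)) x) =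
      Ideal.quotientMapₐ _ F (Ideal.pow_le_comap_pow_of_le_comap hF k) (idealTrans B J k x) := by
  obtain ⟨y, rfl⟩ := Ideal.Quotient.mk_surjective x
  rfl

noncomputable def adicLimMap (F : B →ₐ[A] C) (hF : J ≤ I.comap F) :
    adicLim A B J →ₐ[A] adicLim A C I :=
  AlgHom.codRestrict
    ((AlgHom.pi fun k => (Ideal.quotientMapₐ _ F
        (Ideal.pow_le_comap_pow_of_le_comap hF k)).comp (Pi.evalAlgHom A _ k)).comp
      (adicLim A B J).val)
    (adicLim A C I) fun x k => by
      simp only [AlgHom.comp_apply, AlgHom.pi_apply, Pi.evalAlgHom_apply, Subalgebra.coe_val]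
      rw [idealTrans_quotientMapₐ F hF, x.2 k]

theorem adicLimMap_apply_coe (F : B →ₐ[A] C) (hF : J ≤ I.comap F) (x : adicLim A B J)
    (k : ℕ) :
    (adicLimMap F hF x).1 k =
      Ideal.quotientMapₐ _ F (Ideal.pow_le_comap_pow_of_le_comap hF k) (x.1 k) :=
  rfl

theorem adicLimMap_adicLimOf (F : B →ₐ[A] C) (hF : J ≤ I.comap F) (x : B) :
    adicLimMap F hF (adicLimOf A B J x) = adicLimOf A C I (F x) :=
  rfl

theorem adicLimMap_bijective (F : B →ₐ[A] C) (hF : J ≤ I.comap F)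
    (h : ∀ k, Function.Bijective
      (Ideal.quotientMapₐ _ F (Ideal.pow_le_comap_pow_of_le_comap hF k))) :
    Function.Bijective (adicLimMap F hF) := by
  refine ⟨fun x y hxy => Subtype.ext <| funext fun k => (h k).1 ?_, fun y => ?_⟩
  · simpa only [adicLimMap_apply_coe] using congr_arg (fun z => z.1 k) hxy
  choose x hx using fun k => (h k).2 (y.1 k)
  refine ⟨⟨x, fun k => (h k).1 ?_⟩, Subtype.ext <| funext hx⟩
  rw [← idealTrans_quotientMapₐ F hF, hx, hx]
  exact y.2 k

end AdicLimMap

section GroupRing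

variable {A : Type*} [CommRing A] {L L' : Type*} [AddCommGroup L] [AddCommGroup L']

theorem aug_single (a : L) (b : A) : aug A L (single a b) = b := by
  simp [aug, lift_single]

theorem single_one_sub_one_mem_augIdeal (a : L) : single a (1 : A) - 1 ∈ augIdeal A L := by
  simp [augIdeal, aug_single]

theorem augIdeal_le_comap_of_single_one_sub_one_mem {S : Type*} [CommRing S] [Algebra A S]
    (I : Ideal S) (g : AddMonoidAlgebra A L →ₐ[A] S) (hg : ∀ a, g (single a 1) - 1 ∈ I) :
    augIdeal A L ≤ I.comap g := by
  set q := Ideal.Quotient.mkₐ A I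
  have hq : q.comp g = (Algebra.ofId A (S ⧸ I)).comp (aug A L) := by
    refine algHom_ext (fun a => ?_) (Subsingleton.elim _ _)
    rw [AlgHom.comp_apply, AlgHom.comp_apply, aug_single, map_one, ← sub_eq_zero, ← map_one q,
      ← map_sub]
    exact Ideal.Quotient.eq_zero_iff_mem.mpr (hg a)
  intro x hx
  have hx' : aug A L x = 0 := hx
  have := congr($hq x)
  rw [AlgHom.comp_apply, AlgHom.comp_apply, hx', map_zero] at this
  exact Ideal.mem_comap.mpr (Ideal.Quotient.eq_zero_iff_mem.mp this)

variable (A) in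
theorem augIdeal_le_comap_mapDomainAlgHom (φ : L →+ L') :
    augIdeal A L ≤ (augIdeal A L').comap (mapDomainAlgHom A A φ) :=
  augIdeal_le_comap_of_single_one_sub_one_mem _ _ fun a => by
    simpa using single_one_sub_one_mem_augIdeal (A := A) (φ a)

variable (A) in
noncomputable def levelMap (φ : L →+ L') (k : ℕ) :
    AddMonoidAlgebra A L ⧸ augIdeal A L ^ k →ₐ[A]
      AddMonoidAlgebra A L' ⧸ augIdeal A L' ^ k :=
  Ideal.quotientMapₐ _ (mapDomainAlgHom A A φ)
    (Ideal.pow_le_comap_pow_of_le_comap (augIdeal_le_comap_mapDomainAlgHom A φ) k)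

theorem levelMap_comp {L'' : Type*} [AddCommGroup L''] (φ : L →+ L') (ψ : L' →+ L'')
    (k : ℕ) :
    levelMap A (ψ.comp φ) k = (levelMap A ψ k).comp (levelMap A φ k) := by
  refine Ideal.Quotient.algHom_ext _ (algHom_ext (fun a => ?_) (Subsingleton.elim _ _))
  simp [levelMap]

end GroupRing

section NSMul

variable {A : Type*} [CommRing A] {L : Type*} [AddCommGroup L]

theorem map_augIdeal_pow_eq_bot (k : ℕ) :
    (augIdeal A L).map (Ideal.Quotient.mk (augIdeal A L ^ k)) ^ k = ⊥ := by
  rw [← Ideal.map_pow, Ideal.map_quotient_self]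

theorem mk_single_one_sub_one_mem_map_augIdeal (k : ℕ) (a : L) :
    Ideal.Quotient.mk (augIdeal A L ^ k) (single a 1) - 1 ∈
      (augIdeal A L).map (Ideal.Quotient.mk (augIdeal A L ^ k)) := by
  rw [← map_one (Ideal.Quotient.mk _), ← map_sub]
  exact Ideal.mem_map_of_mem _ (single_one_sub_one_mem_augIdeal a)

theorem isNilpotent_mk_single_one_sub_one (k : ℕ) (a : L) :
    IsNilpotent (Ideal.Quotient.mk (augIdeal A L ^ k) (single a (1 : A)) - 1) :=
  ⟨k, by simpa [map_augIdeal_pow_eq_bot] using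
    Ideal.pow_mem_pow (mk_single_one_sub_one_mem_map_augIdeal k a) k⟩

theorem exists_algHom_pow_mk_single_one_eq {n : ℕ} (hn : IsUnit (n : A)) (k : ℕ) :
    ∃ g : AddMonoidAlgebra A L ⧸ augIdeal A L ^ k →ₐ[A]
        AddMonoidAlgebra A L ⧸ augIdeal A L ^ k,
      ∀ a : L, IsNilpotent (g (Ideal.Quotient.mk _ (single a 1)) - 1) ∧
        g (Ideal.Quotient.mk _ (single a 1)) ^ n = Ideal.Quotient.mk _ (single a 1) := by
  set J := augIdeal A L
  set mk := Ideal.Quotient.mk (J ^ k)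
  have hnS : IsUnit (n : AddMonoidAlgebra A L ⧸ J ^ k) := by
    simpa using hn.map (algebraMap A (AddMonoidAlgebra A L ⧸ J ^ k))
  obtain ⟨ρ, hρ⟩ := exists_monoidHom_pow_eq_of_isNilpotent_sub_one hnS
    ((mk : _ →* _).comp (of A L)) fun a => isNilpotent_mk_single_one_sub_one k a.toAdd
  set g := lift A _ L ρ
  have hg (a : L) : g (single a 1) = ρ (.ofAdd a) := by simp [g]
  -- `g δ_a ≡ 1 mod J`, since a unipotent root of an element `≡ 1` is itself `≡ 1`.
  have hgJ : J ^ k ≤ RingHom.ker g := by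
    have := Ideal.pow_le_comap_pow_of_le_comap
      (augIdeal_le_comap_of_single_one_sub_one_mem (J.map mk) g fun a =>
        hg a ▸ sub_one_mem_of_pow_sub_one_mem hnS _ (hρ _).1
          ((hρ _).2 ▸ mk_single_one_sub_one_mem_map_augIdeal k a)) k
    rwa [map_augIdeal_pow_eq_bot, ← RingHom.ker_eq_comap_bot] at this
  exact ⟨Ideal.Quotient.liftₐ (J ^ k) g hgJ, fun a => hg a ▸ hρ (.ofAdd a)⟩

theorem levelMap_nsmul_bijective {n : ℕ} (hn : IsUnit (n : A)) (k : ℕ) :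
    Function.Bijective (levelMap A (n • AddMonoidHom.id L) k) := by
  set mk := Ideal.Quotient.mk (augIdeal A L ^ k)
  set f := levelMap A (n • AddMonoidHom.id L) k
  have hnS : IsUnit (n : AddMonoidAlgebra A L ⧸ augIdeal A L ^ k) := by
    simpa using hn.map (algebraMap A (AddMonoidAlgebra A L ⧸ augIdeal A L ^ k))
  have hf (a : L) : f (mk (single a 1)) = mk (single (n • a) 1) := by
    change mk (mapDomainAlgHom A A _ (single a 1)) = _
    simp
  have root_eq (a : L) {v} (hv : IsNilpotent (v - 1) ∧ v ^ n = mk (single (n • a) 1)) :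
      v = mk (single a 1) :=
    (existsUnique_pow_eq_of_isNilpotent_sub_one hnS
      (isNilpotent_mk_single_one_sub_one k (n • a))).unique hv
      ⟨isNilpotent_mk_single_one_sub_one k a, by rw [← map_pow, single_pow, one_pow]⟩
  obtain ⟨g, hg⟩ := exists_algHom_pow_mk_single_one_eq (L := L) hn k
  have hgf : g.comp f = AlgHom.id A _ := by
    refine Ideal.Quotient.algHom_ext _ (algHom_ext (fun a => ?_) (Subsingleton.elim _ _))
    change g (f (mk (single a 1))) = mk (single a 1)
    rw [hf]
    exact root_eq a (hg (n • a))
  have hfg : f.comp g = AlgHom.id A _ := by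
    refine Ideal.Quotient.algHom_ext _ (algHom_ext (fun a => ?_) (Subsingleton.elim _ _))
    change f (g (mk (single a 1))) = mk (single a 1)
    refine root_eq a ⟨?_, ?_⟩
    · simpa using (hg a).1.map f
    · rw [← map_pow, (hg a).2]
      exact hf a
  exact (AlgEquiv.ofAlgHom f g hfg hgf).bijective

end NSMul

theorem AddMonoidHom.exists_comp_eq_index_nsmul {L L' : Type*} [AddCommGroup L]
    [AddCommGroup L'] (φ : L →+ L') (hφ : Function.Injective φ) :
    ∃ ψ : L' →+ L, ψ.comp φ = φ.range.index • AddMonoidHom.id L ∧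
      φ.comp ψ = φ.range.index • AddMonoidHom.id L' := by
  set ψ := (AddMonoidHom.ofInjective hφ).symm.toAddMonoidHom.comp
    ((φ.range.index • AddMonoidHom.id L').codRestrict φ.range φ.range.nsmul_index_mem)
  have hφψ : φ.comp ψ = φ.range.index • AddMonoidHom.id L' := by
    ext x
    exact AddMonoidHom.apply_ofInjective_symm hφ _
  refine ⟨ψ, AddMonoidHom.ext fun x => hφ ?_, hφψ⟩
  simpa using congr($hφψ (φ x))

theorem levelMap_bijective_of_comp_eq_nsmul {A : Type*} [CommRing A] {L L' : Type*} [AddCommGroup L]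
    [AddCommGroup L'] {φ : L →+ L'} {ψ : L' →+ L} {n : ℕ} (hn : IsUnit (n : A))
    (hψφ : ψ.comp φ = n • AddMonoidHom.id L) (hφψ : φ.comp ψ = n • AddMonoidHom.id L')
    (k : ℕ) :
    Function.Bijective (levelMap A φ k) := by
  have hL := levelMap_nsmul_bijective (L := L) hn k
  have hL' := levelMap_nsmul_bijective (L := L') hn k
  rw [← hψφ, levelMap_comp, AlgHom.coe_comp] at hL
  rw [← hφψ, levelMap_comp, AlgHom.coe_comp] at hL'
  exact ⟨hL.1.of_comp, hL'.2.of_comp⟩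

theorem statement10_general (A : Type*) [CommRing A]
    (L L' : Type*) [AddCommGroup L] [AddCommGroup L']
    (φ : L →+ L') (hinj : Function.Injective φ)
    (hdeg : IsUnit ((Nat.card (L' ⧸ φ.range) : A))) :
    ∃ Φ : RR A L →ₐ[A] RR A L',
      (∀ x : AddMonoidAlgebra A L,
          Φ (adicLimOf A (AddMonoidAlgebra A L) (augIdeal A L) x) =
            adicLimOf A (AddMonoidAlgebra A L') (augIdeal A L')
              (AddMonoidAlgebra.mapDomainAlgHom A A φ x)) ∧
      (∀ (r : ℕ) (x : RR A L), x.1 r = 0 → (Φ x).1 r = 0) ∧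
      Function.Bijective Φ := by
  obtain ⟨ψ, hψφ, hφψ⟩ := φ.exists_comp_eq_index_nsmul hinj
  refine ⟨adicLimMap _ (augIdeal_le_comap_mapDomainAlgHom A φ), adicLimMap_adicLimOf _ _,
    fun r x hx => by rw [adicLimMap_apply_coe, hx, map_zero], ?_⟩
  exact adicLimMap_bijective _ _ (levelMap_bijective_of_comp_eq_nsmul hdeg hψφ hφψ)

/-- An isogeny `φ : L → L'` of lattices of the same rank whose degree is
invertible in `A` induces an isomorphism `φ_R : R → R'` of the completed group rings.  The
induced map is characterized by compatibility with `A[L] → A[L']` and with the level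
filtrations of the two inverse limits. -/
theorem statement10 (A : Type*) [CommRing A]
    (L L' : Type*) [AddCommGroup L] [AddCommGroup L']
    [Module.Free ℤ L] [Module.Finite ℤ L] [Module.Free ℤ L'] [Module.Finite ℤ L']
    (hrk : Module.finrank ℤ L = Module.finrank ℤ L')
    (φ : L →+ L') (hinj : Function.Injective φ)
    (hfin : Finite (L' ⧸ φ.range))
    (hdeg : IsUnit ((Nat.card (L' ⧸ φ.range) : A))) :
    ∃ Φ : RR A L →ₐ[A] RR A L',
      (∀ x : AddMonoidAlgebra A L,
          Φ (adicLimOf A (AddMonoidAlgebra A L) (augIdeal A L) x) =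
            adicLimOf A (AddMonoidAlgebra A L') (augIdeal A L')
              (AddMonoidAlgebra.mapDomainAlgHom A A φ x)) ∧
      (∀ (r : ℕ) (x : RR A L), x.1 r = 0 → (Φ x).1 r = 0) ∧
      Function.Bijective Φ :=
  statement10_general A L L' φ hinj hdeg
end

section
/- Let F be a totally real number field of degree n with real embeddings τ_1,…,τ_n, and let Γ be a finite-index subgroup of the group O_F^{+,×} of totally positive units of O_F. For natural numbers k_1,…,k_n, one has ∏_{i=1}^n τ_i(u)^{k_i} = 1 for all u ∈ Γ if and only if k_1 = k_2 = ⋯ = k_n. -/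
open NumberField

/-- The subgroup of totally positive units of the ring of integers of `F`, with respect to a
family `τ` of real embeddings of `F`. -/
noncomputable def totPosUnits (F : Type*) [Field F] [NumberField F] {n : ℕ}
    (τ : Fin n → (F →+* ℝ)) : Subgroup (𝓞 F)ˣ where
  carrier := {u | ∀ i, 0 < τ i (algebraMap (𝓞 F) F u)}
  one_mem' := fun i => by simp
  mul_mem' := fun {a b} ha hb i => by
    rw [Units.val_mul, map_mul, map_mul]
    exact mul_pos (ha i) (hb i)
  inv_mem' := fun {u} hu i => by
    have h1 : τ i (algebraMap (𝓞 F) F u) * τ i (algebraMap (𝓞 F) F ↑u⁻¹) = 1 := by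
      rw [← map_mul, ← map_mul, Units.mul_inv, map_one, map_one]
    nlinarith [hu i]

/-! Taking logarithms, the condition says that the linear form `x ↦ ∑ k_i x_i` vanishes on the
image of `Γ` under `u ↦ (log τ_i(u))_i`. As some power of every unit lies in `Γ`, it vanishes on
the image of all units, which by Dirichlet's unit theorem spans the hyperplane `∑ x_i = 0`; hence
`k` is proportional to `(1, …, 1)`. Conversely, a totally positive unit has norm
`∏ τ_i(u) = |N(u)| = 1`. -/

namespace NumberField.InfinitePlace

variable {K : Type*} [Field K]

noncomputable def ofRealEmbedding (φ : K →+* ℝ) : InfinitePlace K :=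
  mk (Complex.ofRealHom.comp φ)

theorem ofRealEmbedding_apply (φ : K →+* ℝ) (x : K) : ofRealEmbedding φ x = |φ x| := by
  simp [ofRealEmbedding]

theorem isReal_ofRealEmbedding (φ : K →+* ℝ) : IsReal (ofRealEmbedding φ) :=
  isReal_mk_iff.mpr <| ComplexEmbedding.isReal_iff.mpr <| by
    ext x; simp [ComplexEmbedding.conjugate_coe_eq]

theorem ofRealEmbedding_injective : Function.Injective (ofRealEmbedding (K := K)) := by
  intro φ ψ h
  have hφ : ComplexEmbedding.conjugate (Complex.ofRealHom.comp φ) = Complex.ofRealHom.comp φ :=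
    ComplexEmbedding.isReal_iff.mp (isReal_mk_iff.mp (isReal_ofRealEmbedding φ))
  have hcomp : Complex.ofRealHom.comp φ = Complex.ofRealHom.comp ψ := by
    rcases mk_eq_iff.mp h with h | h
    · exact h
    · rwa [hφ] at h
  ext x
  simpa using RingHom.congr_fun hcomp x

theorem bijective_ofRealEmbedding_comp [NumberField K] {ι : Type*} [Fintype ι]
    {τ : ι → (K →+* ℝ)} (hτ : Function.Injective τ)
    (hcard : Fintype.card ι = Module.finrank ℚ K) :
    Function.Bijective (ofRealEmbedding ∘ τ) := by
  refine (Fintype.bijective_iff_injective_and_card _).mpr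
    ⟨ofRealEmbedding_injective.comp hτ, le_antisymm ?_ ?_⟩
  · exact Fintype.card_le_of_injective _ (ofRealEmbedding_injective.comp hτ)
  · have := card_add_two_mul_card_eq_rank K
    rw [card_eq_nrRealPlaces_add_nrComplexPlaces]
    omega

end NumberField.InfinitePlace

namespace NumberField.Units

open InfinitePlace dirichletUnitTheorem

variable {K : Type*} [Field K] [NumberField K]

open scoped Classical in
theorem eq_zero_of_forall_dotProduct_logEmbedding_eq_zero (d : logSpace K)
    (h : ∀ u : (𝓞 K)ˣ, d ⬝ᵥ logEmbedding K (Additive.ofMul u) = 0) : d = 0 := by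
  have hspan : Submodule.span ℝ (unitLattice K : Set (logSpace K)) ≤
      LinearMap.ker (dotProductBilin ℝ ℝ d) := by
    rw [Submodule.span_le]
    rintro _ ⟨u, -, rfl⟩
    exact h u.toMul
  rw [unitLattice_span_eq_top, top_le_iff, LinearMap.ker_eq_top] at hspan
  funext w
  simpa using LinearMap.congr_fun hspan (Pi.single w 1)

theorem forall_sum_mul_log_eq_zero_iff (c : InfinitePlace K → ℝ) :
    (∀ u : (𝓞 K)ˣ, ∑ w, c w * Real.log (w u) = 0) ↔ ∃ a : ℝ, ∀ w, c w = a * mult w := by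
  classical
  constructor
  · intro h
    -- `logEmbedding` drops the `w₀` coordinate, so first subtract the multiple of `mult` that
    -- kills `c w₀`.
    set a := c w₀ / mult (w₀ : InfinitePlace K)
    set g : InfinitePlace K → ℝ := fun w => c w - a * mult w
    have hg₀ : g w₀ = 0 := by simp [g, a]
    have hd := eq_zero_of_forall_dotProduct_logEmbedding_eq_zero (fun w => g w.1 / mult w.1)
      fun u => by
        calc _ = ∑ w, g w * Real.log (w (u : K)) := by
              rw [Fintype.sum_eq_add_sum_subtype_ne _ w₀, hg₀, zero_mul, zero_add]
              simp only [dotProduct, logEmbedding_component]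
              exact Finset.sum_congr rfl fun w _ => by field_simp
          _ = ∑ w, c w * Real.log (w (u : K)) - a * ∑ w, mult w * Real.log (w (u : K)) := by
              simp only [g, sub_mul, Finset.sum_sub_distrib, Finset.mul_sum, mul_assoc]
          _ = 0 := by rw [h u, sum_mult_mul_log, mul_zero, sub_zero]
    refine ⟨a, fun w => ?_⟩
    rw [← sub_eq_zero]
    by_cases hw : w = w₀
    · exact hw ▸ hg₀
    · simpa [mult_coe_ne_zero] using congr_fun hd ⟨w, hw⟩
  · rintro ⟨a, hc⟩ u
    simp_rw [hc, mul_assoc, ← Finset.mul_sum, sum_mult_mul_log, mul_zero]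

theorem forall_mem_sum_mul_log_eq_zero_iff {Γ : Subgroup (𝓞 K)ˣ}
    (hΓ : ∀ u : (𝓞 K)ˣ, ∃ N ≠ 0, u ^ N ∈ Γ) (c : InfinitePlace K → ℝ) :
    (∀ u ∈ Γ, ∑ w, c w * Real.log (w u) = 0) ↔ ∀ u : (𝓞 K)ˣ, ∑ w, c w * Real.log (w u) = 0 := by
  refine ⟨fun h u => ?_, fun h u _ => h u⟩
  obtain ⟨N, hN, hu⟩ := hΓ u
  have hpow := h _ hu
  simp_rw [Units.val_pow_eq_pow_val, map_pow, Real.log_pow, mul_left_comm _ (N : ℝ),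
    ← Finset.mul_sum] at hpow
  exact (mul_eq_zero.mp hpow).resolve_left (by exact_mod_cast hN)

end NumberField.Units

theorem Real.prod_pow_eq_one_iff_sum_mul_log_eq_zero {ι : Type*} [Fintype ι] {x : ι → ℝ}
    (hx : ∀ i, 0 < x i) (k : ι → ℕ) :
    ∏ i, x i ^ k i = 1 ↔ ∑ i, (k i : ℝ) * Real.log (x i) = 0 := by
  have hprod : 0 < ∏ i, x i ^ k i := Finset.prod_pos fun i _ => pow_pos (hx i) _
  rw [← Real.exp_log hprod, Real.exp_eq_one_iff,
    Real.log_prod fun i _ => (pow_pos (hx i) _).ne']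
  simp_rw [Real.log_pow]

section TotallyPositive

variable {F : Type*} [Field F] [NumberField F] {n : ℕ} (τ : Fin n → (F →+* ℝ))

theorem sq_mem_totPosUnits (v : (𝓞 F)ˣ) : v ^ 2 ∈ totPosUnits F τ := fun i => by
  rw [Units.val_pow_eq_pow_val, map_pow, map_pow]
  exact pow_two_pos_of_ne_zero ((map_ne_zero (τ i)).mpr (Units.coe_ne_zero v))

theorem exists_pow_mem_of_relIndex_totPosUnits_ne_zero {Γ : Subgroup (𝓞 F)ˣ}
    (hidx : Γ.relIndex (totPosUnits F τ) ≠ 0) (v : (𝓞 F)ˣ) : ∃ N ≠ 0, v ^ N ∈ Γ :=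
  ⟨2 * Γ.relIndex (totPosUnits F τ), by positivity,
    pow_mul v 2 _ ▸ Γ.pow_relIndex_mem (sq_mem_totPosUnits τ v)⟩

end TotallyPositive

open InfinitePlace Units dirichletUnitTheorem in
/-- Let `F` be a totally real number field of degree `n` with real
embeddings `τ_1, …, τ_n`, and `Γ` a finite-index subgroup of the totally positive units.  For
natural numbers `k_1, …, k_n` one has `∏ i, τ_i(u)^{k_i} = 1` for all `u ∈ Γ` iff all the
`k_i` are equal. -/
theorem statement15 (F : Type*) [Field F] [NumberField F]
    (n : ℕ) (hn : n = Module.finrank ℚ F)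
    (τ : Fin n → (F →+* ℝ)) (hτ : Function.Bijective τ)
    (Γ : Subgroup (𝓞 F)ˣ) (hΓ : Γ ≤ totPosUnits F τ)
    (hidx : Γ.relIndex (totPosUnits F τ) ≠ 0)
    (k : Fin n → ℕ) :
    (∀ u ∈ Γ, ∏ i, (τ i (algebraMap (𝓞 F) F u)) ^ (k i) = 1) ↔ (∀ i j, k i = k j) := by
  set e : Fin n ≃ InfinitePlace F := Equiv.ofBijective _
    (bijective_ofRealEmbedding_comp hτ.injective (by rw [Fintype.card_fin, hn]))
  have he (i : Fin n) (x : F) : e i x = |τ i x| := ofRealEmbedding_apply _ _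
  have hmult (w : InfinitePlace F) : mult w = 1 := by
    rw [← e.apply_symm_apply w]
    exact (isReal_ofRealEmbedding _).mult_eq_one
  have hlog : ∀ u ∈ Γ, ∏ i, (τ i (algebraMap (𝓞 F) F u)) ^ (k i) = 1 ↔
      ∑ w, (k (e.symm w) : ℝ) * Real.log (w u) = 0 := fun u hu => by
    rw [Real.prod_pow_eq_one_iff_sum_mul_log_eq_zero (hΓ hu), ← e.sum_comp]
    simp_rw [e.symm_apply_apply, he, abs_of_pos (hΓ hu _)]
  rw [forall₂_congr hlog, forall_mem_sum_mul_log_eq_zero_iff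
    (exists_pow_mem_of_relIndex_totPosUnits_ne_zero τ hidx), forall_sum_mul_log_eq_zero_iff]
  simp_rw [hmult, Nat.cast_one, mul_one]
  refine ⟨fun ⟨a, ha⟩ i j => ?_, fun h => ⟨k (e.symm w₀), fun w => by rw [h]⟩⟩
  simpa using (ha (e i)).trans (ha (e j)).symm
end
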